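/- Let 0 < b < 1/2, let μ* be the symmetric branching measure on C with constant parameter b, and let T be the associated capacity. For n ∈ ℕ let X_n = {x ∈ 2^ℕ : x(n) = 0}. Then T(X₀) = 1 − b, T(X_{n+1}) = (2 − 2b)·T(X_n) − (1 − 2b)·T(X_n)² for all n, and lim_{n→∞} T(X_n) = 1. -/

import Mathlib

/-!
The event `K ∩ X_n ≠ ∅` depends only on the finite tree `T_K ∩ {0,1}^{≤ n+1}`, so its complement
has probability `u_n`, the total weight of the trees of height `n + 1` with no node of length
`n + 1` ending in `0`. Cutting such a tree at the root leaves two subtrees, one of them possibly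
empty, each missing the level below; the weight factors as root weight times subtree weights, and
summing over the three shapes of the root gives `u_{n+1} = (1 - 2b) u_n² + 2b u_n` with `u_0 = b`.
As `u_{n+1} = u_n (2b + (1 - 2b) u_n)` and the factor stays below `2b + (1 - 2b) b < 1`, `u_n → 0`
geometrically, and `T(X_n) = 1 - u_n`.
-/

open Set MeasureTheory Topology Filter

/-- Cantor space `2^ℕ`. -/
abbrev Cantor : Type := ℕ → Bool

/-- The basic interval `I(σ)` of all extensions of the finite binary string `σ`. -/
def cyl (σ : List Bool) : Set Cantor :=
  {x | ∀ i : Fin σ.length, x i = σ.get i}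

/-- The space `C` of nonempty closed subsets of Cantor space. -/
abbrev CC : Type := {K : Set Cantor // K.Nonempty ∧ IsClosed K}

/-- The hit-or-miss topology on `C`, generated by the sets
`V(U) = {K : K ∩ U ≠ ∅}` and `W(U) = {K : K ⊆ U}` for `U` open. -/
instance (priority := 10000) hitMissTop : TopologicalSpace CC :=
  TopologicalSpace.generateFrom
    ({S | ∃ U : Set Cantor, IsOpen U ∧ S = {K : CC | (K.1 ∩ U).Nonempty}} ∪
     {S | ∃ U : Set Cantor, IsOpen U ∧ S = {K : CC | K.1 ⊆ U}})

/-- The Borel σ-algebra of the hit-or-miss topology. -/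
instance (priority := 10000) hitMissMeasurable : MeasurableSpace CC := borel CC

/-- `A` is a finite tree of height `n` without dead ends. -/
def FinTree (n : ℕ) (A : Finset (List Bool)) : Prop :=
  A.Nonempty ∧
  (∀ σ ∈ A, σ.length ≤ n) ∧
  (∀ σ τ : List Bool, σ <+: τ → τ ∈ A → σ ∈ A) ∧
  (∀ σ ∈ A, σ.length < n → σ ++ [false] ∈ A ∨ σ ++ [true] ∈ A)

/-- `U_A = {K ∈ C : T_K ∩ {0,1}^{≤ n} = A}`. -/
def UA (n : ℕ) (A : Finset (List Bool)) : Set CC :=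
  {K | ∀ σ : List Bool, σ.length ≤ n → (σ ∈ A ↔ (K.1 ∩ cyl σ).Nonempty)}

/-- The weight of a node `σ` of `A` in the symmetric branching process with parameter `β`. -/
noncomputable def symWeight (β : List Bool → ℝ) (A : Finset (List Bool)) (σ : List Bool) : ℝ :=
  if σ ++ [false] ∈ A ∧ σ ++ [true] ∈ A then 1 - 2 * β σ else β σ

/-- `μ` is the symmetric branching measure on `C` with parameter `β`. -/
def IsSymBranching (β : List Bool → ℝ) (μ : Measure CC) : Prop :=
  IsProbabilityMeasure μ ∧
  ∀ (n : ℕ) (A : Finset (List Bool)), FinTree n A →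
    (μ (UA n A)).toReal = ∏ σ ∈ A.filter (fun σ => σ.length < n), symWeight β A σ

/-- The weight of a node `σ` of `A` in the `(b₀,b₁)`-branching process. -/
noncomputable def asymWeight (b0 b1 : ℝ) (A : Finset (List Bool)) (σ : List Bool) : ℝ :=
  if σ ++ [false] ∈ A ∧ σ ++ [true] ∈ A then 1 - b0 - b1
  else if σ ++ [false] ∈ A then b0 else b1

/-- `μ` is the `(b₀,b₁)`-branching measure on `C`. -/
def IsBranching (b0 b1 : ℝ) (μ : Measure CC) : Prop :=
  IsProbabilityMeasure μ ∧
  ∀ (n : ℕ) (A : Finset (List Bool)), FinTree n A →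
    (μ (UA n A)).toReal = ∏ σ ∈ A.filter (fun σ => σ.length < n), asymWeight b0 b1 A σ

/-- The capacity `T(Q) = μ*({K ∈ C : K ∩ Q ≠ ∅})` associated to a measure on `C`. -/
noncomputable def cap (μ : Measure CC) (Q : Set Cantor) : ℝ :=
  (μ {K : CC | (K.1 ∩ Q).Nonempty}).toReal

open scoped Classical

section Trees

noncomputable def Trees (m : ℕ) : Finset (Finset (List Bool)) :=
  (List.finite_length_le Bool m).toFinset.powerset.filter (fun A => FinTree m A)

theorem mem_Trees {m : ℕ} {A : Finset (List Bool)} : A ∈ Trees m ↔ FinTree m A := by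
  simp only [Trees, Finset.mem_filter, Finset.mem_powerset, and_iff_right_iff_imp]
  intro hA σ hσ
  simpa using hA.2.1 σ hσ

theorem FinTree.nil_mem {m : ℕ} {A : Finset (List Bool)} (hA : FinTree m A) : [] ∈ A := by
  obtain ⟨σ, hσ⟩ := hA.1
  exact hA.2.2.1 [] σ List.nil_prefix hσ

noncomputable def child (c : Bool) (A : Finset (List Bool)) : Finset (List Bool) :=
  (A.image List.tail).filter (fun σ => c :: σ ∈ A)

@[simp]
theorem mem_child {c : Bool} {A : Finset (List Bool)} {σ : List Bool} :
    σ ∈ child c A ↔ c :: σ ∈ A := by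
  simp only [child, Finset.mem_filter, Finset.mem_image, and_iff_right_iff_imp]
  exact fun h => ⟨_, h, rfl⟩

def consTree (B₀ B₁ : Finset (List Bool)) : Finset (List Bool) :=
  insert [] (B₀.image (List.cons false) ∪ B₁.image (List.cons true))

@[simp]
theorem nil_mem_consTree {B₀ B₁ : Finset (List Bool)} : [] ∈ consTree B₀ B₁ := by
  simp [consTree]

@[simp]
theorem cons_mem_consTree {B₀ B₁ : Finset (List Bool)} {c : Bool} {σ : List Bool} :
    c :: σ ∈ consTree B₀ B₁ ↔ σ ∈ cond c B₁ B₀ := by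
  cases c <;> simp [consTree]

@[simp]
theorem child_consTree {B₀ B₁ : Finset (List Bool)} {c : Bool} :
    child c (consTree B₀ B₁) = cond c B₁ B₀ := by
  ext σ; simp

theorem consTree_child {A : Finset (List Bool)} (hA : [] ∈ A) :
    consTree (child false A) (child true A) = A := by
  ext τ
  rcases τ with _ | ⟨c, σ⟩
  · simpa using hA
  · cases c <;> simp

theorem FinTree.child_mem {m : ℕ} {A : Finset (List Bool)} (hA : FinTree (m + 1) A) (c : Bool) :
    child c A ∈ insert ∅ (Trees m) := by
  obtain ⟨-, hlen, hpre, hext⟩ := hA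
  by_cases hc : [c] ∈ A
  · refine Finset.mem_insert_of_mem (mem_Trees.2 ⟨⟨[], mem_child.2 hc⟩, ?_, ?_, ?_⟩)
    · intro σ hσ
      simpa using hlen _ (mem_child.1 hσ)
    · intro σ τ hστ hτ
      exact mem_child.2 (hpre _ _ (List.cons_prefix_cons.2 ⟨rfl, hστ⟩) (mem_child.1 hτ))
    · intro σ hσ hσm
      simpa using hext (c :: σ) (mem_child.1 hσ) (by simpa using hσm)
  · refine Finset.mem_insert.2 (Or.inl (Finset.eq_empty_of_forall_notMem fun σ hσ => hc ?_))
    exact hpre [c] (c :: σ) (List.cons_prefix_cons.2 ⟨rfl, List.nil_prefix⟩) (mem_child.1 hσ)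

theorem consTree_mem_Trees {m : ℕ} {B₀ B₁ : Finset (List Bool)}
    (h₀ : B₀ ∈ insert ∅ (Trees m)) (h₁ : B₁ ∈ insert ∅ (Trees m)) (hne : (B₀, B₁) ≠ (∅, ∅)) :
    consTree B₀ B₁ ∈ Trees (m + 1) := by
  have hB : ∀ c, cond c B₁ B₀ = ∅ ∨ FinTree m (cond c B₁ B₀) := fun c => by
    cases c
    · simpa [mem_Trees] using h₀
    · simpa [mem_Trees] using h₁
  have tree_of_mem : ∀ {c σ}, σ ∈ cond c B₁ B₀ → FinTree m (cond c B₁ B₀) := fun hσ =>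
    (hB _).resolve_left (Finset.ne_empty_of_mem hσ)
  refine mem_Trees.2 ⟨⟨[], nil_mem_consTree⟩, ?_, ?_, ?_⟩
  · rintro (_ | ⟨c, σ⟩) hσ
    · simp
    · rw [cons_mem_consTree] at hσ
      simpa using (tree_of_mem hσ).2.1 σ hσ
  · rintro (_ | ⟨c, σ⟩) (_ | ⟨d, τ⟩) hστ hτ
    · exact nil_mem_consTree
    · exact nil_mem_consTree
    · simp at hστ
    · obtain ⟨rfl, hστ'⟩ := List.cons_prefix_cons.1 hστ
      rw [cons_mem_consTree] at hτ ⊢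
      exact (tree_of_mem hτ).2.2.1 σ τ hστ' hτ
  · rintro (_ | ⟨c, σ⟩) hσ hσm
    · obtain ⟨c, hc⟩ : ∃ c, cond c B₁ B₀ ≠ ∅ := by
        by_contra! h
        exact hne (Prod.ext (h false) (h true))
      have hnil : [] ∈ cond c B₁ B₀ := ((hB c).resolve_left hc).nil_mem
      cases c
      · exact Or.inl (cons_mem_consTree.2 hnil)
      · exact Or.inr (cons_mem_consTree.2 hnil)
    · rw [cons_mem_consTree] at hσ
      simpa using (tree_of_mem hσ).2.2.2 σ hσ (by simpa using hσm)

end Trees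

section Weights

variable (b : ℝ)

noncomputable def treeWeight (m : ℕ) (A : Finset (List Bool)) : ℝ :=
  ∏ σ ∈ A.filter (fun σ => σ.length < m), symWeight (fun _ => b) A σ

noncomputable def rootWeight (B₀ B₁ : Finset (List Bool)) : ℝ :=
  if [] ∈ B₀ ∧ [] ∈ B₁ then 1 - 2 * b else b

variable {b}

@[simp]
theorem treeWeight_empty (m : ℕ) : treeWeight b m ∅ = 1 := by
  simp [treeWeight]

theorem treeWeight_consTree (m : ℕ) (B₀ B₁ : Finset (List Bool)) :
    treeWeight b (m + 1) (consTree B₀ B₁) =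
      rootWeight b B₀ B₁ * treeWeight b m B₀ * treeWeight b m B₁ := by
  have hfilter : (consTree B₀ B₁).filter (fun σ => σ.length < m + 1) =
      insert [] ((B₀.filter (fun σ => σ.length < m)).image (List.cons false) ∪
        (B₁.filter (fun σ => σ.length < m)).image (List.cons true)) := by
    simp [consTree, Finset.filter_insert, Finset.filter_union, Finset.filter_image]
  have hdisj : Disjoint ((B₀.filter (fun σ => σ.length < m)).image (List.cons false))
      ((B₁.filter (fun σ => σ.length < m)).image (List.cons true)) := by
    simp only [Finset.disjoint_left, Finset.mem_image]
    rintro _ ⟨σ, -, rfl⟩ ⟨τ, -, ⟨⟩⟩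
  rw [treeWeight, hfilter, Finset.prod_insert (by simp), Finset.prod_union hdisj,
    Finset.prod_image (by simp), Finset.prod_image (by simp), mul_assoc]
  simp [treeWeight, rootWeight, symWeight]

end Weights

section RootDecomposition

theorem sum_Trees_succ {M : Type*} [AddCommMonoid M] (m : ℕ) (f : Finset (List Bool) → M) :
    ∑ A ∈ Trees (m + 1), f A =
      ∑ p ∈ (insert ∅ (Trees m) ×ˢ insert ∅ (Trees m)).erase (∅, ∅), f (consTree p.1 p.2) := by
  refine Finset.sum_nbij' (fun A => (child false A, child true A)) (fun p => consTree p.1 p.2)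
    ?_ ?_ ?_ ?_ ?_
  · intro A hA
    have hA := mem_Trees.1 hA
    obtain ⟨c, hc⟩ : ∃ c, [c] ∈ A := by
      simpa using hA.2.2.2 [] hA.nil_mem (Nat.succ_pos m)
    refine Finset.mem_erase.2
      ⟨fun hempty => ?_, Finset.mem_product.2 ⟨hA.child_mem _, hA.child_mem _⟩⟩
    have hc : [] ∈ child c A := mem_child.2 hc
    cases c <;> simp_all
  · intro p hp
    obtain ⟨hne, hp⟩ := Finset.mem_erase.1 hp
    exact consTree_mem_Trees (Finset.mem_product.1 hp).1 (Finset.mem_product.1 hp).2 hne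
  · intro A hA
    exact consTree_child (mem_Trees.1 hA).nil_mem
  · intro p _
    simp
  · intro A hA
    rw [consTree_child (mem_Trees.1 hA).nil_mem]

theorem sum_Trees_succ_of_mul {b : ℝ} {m : ℕ} {φ₀ φ₁ Φ : Finset (List Bool) → ℝ}
    (h₀ : φ₀ ∅ = 1) (h₁ : φ₁ ∅ = 1)
    (hΦ : ∀ B₀ B₁, Φ (consTree B₀ B₁) = rootWeight b B₀ B₁ * φ₀ B₀ * φ₁ B₁) :
    ∑ A ∈ Trees (m + 1), Φ A =
      (1 - 2 * b) * (∑ B ∈ Trees m, φ₀ B) * (∑ B ∈ Trees m, φ₁ B) +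
        b * ((∑ B ∈ Trees m, φ₀ B) + ∑ B ∈ Trees m, φ₁ B) := by
  have hempty : (∅ : Finset (List Bool)) ∉ Trees m := fun h =>
    Finset.notMem_empty _ (mem_Trees.1 h).nil_mem
  have hroot : ∀ B₀ ∈ Trees m, ∀ B₁ ∈ Trees m, rootWeight b B₀ B₁ = 1 - 2 * b :=
    fun B₀ h₀ B₁ h₁ => if_pos ⟨(mem_Trees.1 h₀).nil_mem, (mem_Trees.1 h₁).nil_mem⟩
  have hinner : ∀ B₀ ∈ Trees m, ∑ B₁ ∈ Trees m, rootWeight b B₀ B₁ * φ₀ B₀ * φ₁ B₁ =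
      (1 - 2 * b) * φ₀ B₀ * ∑ B₁ ∈ Trees m, φ₁ B₁ := fun B₀ h₀ => by
    rw [Finset.mul_sum]
    exact Finset.sum_congr rfl fun B₁ h₁ => by rw [hroot B₀ h₀ B₁ h₁]
  rw [sum_Trees_succ, Finset.sum_erase_eq_sub (by simp), Finset.sum_product]
  simp only [hΦ, Finset.sum_insert hempty, Finset.sum_add_distrib]
  rw [Finset.sum_congr rfl hinner]
  simp only [rootWeight, Finset.notMem_empty, false_and, and_false, if_false, h₀, h₁, mul_one,
    ← Finset.mul_sum, ← Finset.sum_mul]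
  ring

end RootDecomposition

section Missing

theorem Trees_zero : Trees 0 = {{[]}} := by
  ext A
  rw [mem_Trees, Finset.mem_singleton]
  constructor
  · intro hA
    ext σ
    rw [Finset.mem_singleton]
    exact ⟨fun hσ => List.length_eq_zero_iff.1 (Nat.le_zero.1 (hA.2.1 σ hσ)),
      fun hσ => hσ ▸ hA.nil_mem⟩
  · rintro rfl
    refine ⟨by simp, by simp, fun σ τ hστ hτ => ?_, by simp⟩
    simp_all [List.prefix_nil]

/-- The finite-tree counterpart of meeting `{x | x n = false}`. -/
def HasZeroAt (n : ℕ) (A : Finset (List Bool)) : Prop :=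
  ∃ σ ∈ A, σ[n]? = some false

theorem hasZeroAt_zero_consTree {B₀ B₁ : Finset (List Bool)} :
    HasZeroAt 0 (consTree B₀ B₁) ↔ B₀.Nonempty := by
  simp [HasZeroAt, consTree, Finset.Nonempty, or_and_right, exists_or]

theorem hasZeroAt_succ_consTree {n : ℕ} {B₀ B₁ : Finset (List Bool)} :
    HasZeroAt (n + 1) (consTree B₀ B₁) ↔ HasZeroAt n B₀ ∨ HasZeroAt n B₁ := by
  simp [HasZeroAt, consTree, or_and_right, exists_or]

variable (b : ℝ)

noncomputable def missWeight (n : ℕ) (A : Finset (List Bool)) : ℝ :=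
  if HasZeroAt n A then 0 else treeWeight b (n + 1) A

noncomputable def missMass (n : ℕ) : ℝ :=
  ∑ A ∈ Trees (n + 1), missWeight b n A

theorem missMass_zero : missMass b 0 = b := by
  have h := sum_Trees_succ_of_mul (b := b) (m := 0) (Φ := missWeight b 0)
    (φ₀ := fun B => if B.Nonempty then 0 else treeWeight b 0 B) (φ₁ := treeWeight b 0)
    (by simp) (by simp) fun B₀ B₁ => by
      simp only [missWeight, hasZeroAt_zero_consTree, treeWeight_consTree]
      split_ifs <;> ring
  simpa [missMass, Trees_zero, treeWeight] using h

theorem missMass_succ (n : ℕ) :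
    missMass b (n + 1) = (1 - 2 * b) * missMass b n ^ 2 + 2 * b * missMass b n := by
  have h := sum_Trees_succ_of_mul (b := b) (m := n + 1) (Φ := missWeight b (n + 1))
    (φ₀ := missWeight b n) (φ₁ := missWeight b n)
    (by simp [missWeight, HasZeroAt]) (by simp [missWeight, HasZeroAt]) fun B₀ B₁ => by
      simp only [missWeight, hasZeroAt_succ_consTree, treeWeight_consTree]
      split_ifs <;> simp_all
  rw [missMass, h, ← missMass]
  ring

end Missing

theorem tendsto_zero_of_succ_eq_quadratic {b : ℝ} {u : ℕ → ℝ} (hb0 : 0 ≤ b) (hb : b < 1 / 2)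
    (h0 : 0 ≤ u 0) (h1 : u 0 < 1) (hu : ∀ n, u (n + 1) = (1 - 2 * b) * u n ^ 2 + 2 * b * u n) :
    Tendsto u atTop (𝓝 0) := by
  set c := 2 * b + (1 - 2 * b) * u 0
  have hb1 : 0 ≤ 1 - 2 * b := by linarith
  have hc0 : 0 ≤ c := add_nonneg (by linarith) (mul_nonneg hb1 h0)
  have hc1 : c < 1 := by nlinarith
  have hbound : ∀ n, 0 ≤ u n ∧ u n ≤ u 0 * c ^ n := by
    intro n
    induction n with
    | zero => simp [h0]
    | succ n ih =>
      obtain ⟨hn0, hn⟩ := ih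
      have hle : u n ≤ u 0 := hn.trans (mul_le_of_le_one_right h0 (pow_le_one₀ hc0 hc1.le))
      have hfac0 : 0 ≤ 2 * b + (1 - 2 * b) * u n := add_nonneg (by linarith) (mul_nonneg hb1 hn0)
      have hfac : 2 * b + (1 - 2 * b) * u n ≤ c := by
        nlinarith [mul_le_mul_of_nonneg_left hle hb1]
      have hsucc : u (n + 1) = u n * (2 * b + (1 - 2 * b) * u n) := by rw [hu]; ring
      rw [hsucc, pow_succ, ← mul_assoc]
      exact ⟨mul_nonneg hn0 hfac0, mul_le_mul hn hfac hfac0 (hn0.trans hn)⟩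
  refine squeeze_zero (fun n => (hbound n).1) (fun n => (hbound n).2) ?_
  simpa using (tendsto_pow_atTop_nhds_zero_of_lt_one hc0 hc1).const_mul (u 0)

section Cylinders

theorem mem_cyl {σ : List Bool} {x : Cantor} :
    x ∈ cyl σ ↔ ∀ i (hi : i < σ.length), x i = σ[i] := by
  simp [cyl, Fin.forall_iff]

theorem isOpen_cyl (σ : List Bool) : IsOpen (cyl σ) := by
  simp only [cyl, Set.ofPred_forall]
  exact isOpen_iInter_of_finite fun i =>
    (isOpen_discrete {σ.get i}).preimage
      (continuous_apply (i : ℕ) : Continuous fun x : Cantor => x i)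

theorem cyl_anti {σ τ : List Bool} (h : σ <+: τ) : cyl τ ⊆ cyl σ := fun x hx =>
  mem_cyl.2 fun i hi => by rw [h.getElem hi]; exact mem_cyl.1 hx i (hi.trans_le h.length_le)

theorem mem_cyl_append_singleton {σ : List Bool} {x : Cantor} (hx : x ∈ cyl σ) :
    x ∈ cyl (σ ++ [x σ.length]) := by
  refine mem_cyl.2 fun i hi => ?_
  rw [List.getElem_append]
  split_ifs with h
  · exact mem_cyl.1 hx i h
  · obtain rfl : i = σ.length := by simp at hi; omega
    simp

theorem mem_cyl_ofFn (x : Cantor) (n : ℕ) : x ∈ cyl (List.ofFn fun i : Fin n => x i) :=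
  mem_cyl.2 fun i hi => by simp

end Cylinders

section Measure

theorem measurableSet_hit {U : Set Cantor} (hU : IsOpen U) :
    MeasurableSet {K : CC | (K.1 ∩ U).Nonempty} :=
  MeasurableSpace.measurableSet_generateFrom
    (TopologicalSpace.isOpen_generateFrom_of_mem (Or.inl ⟨U, hU, rfl⟩))

/-- The tree `T_K ∩ {0,1}^{≤ m}` of a closed set `K`. -/
noncomputable def treeOf (m : ℕ) (K : CC) : Finset (List Bool) :=
  (List.finite_length_le Bool m).toFinset.filter fun σ => (K.1 ∩ cyl σ).Nonempty

@[simp]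
theorem mem_treeOf {m : ℕ} {K : CC} {σ : List Bool} :
    σ ∈ treeOf m K ↔ σ.length ≤ m ∧ (K.1 ∩ cyl σ).Nonempty := by
  simp [treeOf]

theorem treeOf_mem_Trees (m : ℕ) (K : CC) : treeOf m K ∈ Trees m := by
  refine mem_Trees.2
    ⟨⟨[], mem_treeOf.2 ⟨Nat.zero_le m, ?_⟩⟩, fun σ hσ => (mem_treeOf.1 hσ).1, ?_, ?_⟩
  · obtain ⟨x, hx⟩ := K.2.1
    exact ⟨x, hx, mem_cyl.2 fun i hi => absurd hi (Nat.not_lt_zero i)⟩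
  · intro σ τ hστ hτ
    obtain ⟨hlen, x, hxK, hxτ⟩ := mem_treeOf.1 hτ
    exact mem_treeOf.2 ⟨hστ.length_le.trans hlen, x, hxK, cyl_anti hστ hxτ⟩
  · intro σ hσ hσm
    obtain ⟨-, x, hxK, hxσ⟩ := mem_treeOf.1 hσ
    have hmem : σ ++ [x σ.length] ∈ treeOf m K :=
      mem_treeOf.2 ⟨by simpa using hσm, x, hxK, mem_cyl_append_singleton hxσ⟩
    cases h : x σ.length
    · exact Or.inl (h ▸ hmem)
    · exact Or.inr (h ▸ hmem)

theorem mem_UA_iff {m : ℕ} {A : Finset (List Bool)} {K : CC} (hA : ∀ σ ∈ A, σ.length ≤ m) :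
    K ∈ UA m A ↔ treeOf m K = A := by
  constructor
  · intro hK
    ext σ
    rw [mem_treeOf]
    exact ⟨fun ⟨hσ, hKσ⟩ => (hK σ hσ).2 hKσ, fun hσ => ⟨hA σ hσ, (hK σ (hA σ hσ)).1 hσ⟩⟩
  · rintro rfl σ hσ
    simp [hσ]

theorem measurableSet_UA (m : ℕ) (A : Finset (List Bool)) : MeasurableSet (UA m A) := by
  simp only [UA, Set.ofPred_forall]
  refine MeasurableSet.iInter fun σ => MeasurableSet.iInter fun _ => ?_
  by_cases hσ : σ ∈ A
  · convert measurableSet_hit (isOpen_cyl σ) using 1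
    simp [hσ]
  · convert (measurableSet_hit (isOpen_cyl σ)).compl using 1
    ext K
    simp [hσ]

variable {b : ℝ} {μ : Measure CC}

theorem measureReal_treeOf_mem (hμ : IsSymBranching (fun _ => b) μ) {m : ℕ}
    {S : Finset (Finset (List Bool))} (hS : S ⊆ Trees m) :
    μ.real {K | treeOf m K ∈ S} = ∑ A ∈ S, treeWeight b m A := by
  have hfiber : ∀ A ∈ S, treeOf m ⁻¹' {A} = UA m A := fun A hA => by
    ext K
    exact (mem_UA_iff (mem_Trees.1 (hS hA)).2.1).symm
  have := hμ.1
  rw [measureReal_def, show {K | treeOf m K ∈ S} = treeOf m ⁻¹' ↑S from rfl,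
    ← sum_measure_preimage_singleton S fun A hA => hfiber A hA ▸ measurableSet_UA m A,
    ENNReal.toReal_sum fun _ _ => measure_ne_top μ _]
  exact Finset.sum_congr rfl fun A hA => by
    rw [hfiber A hA, hμ.2 m A (mem_Trees.1 (hS hA)), treeWeight]

theorem inter_nonempty_iff_hasZeroAt {n : ℕ} {K : CC} :
    (K.1 ∩ {x : Cantor | x n = false}).Nonempty ↔ HasZeroAt n (treeOf (n + 1) K) := by
  constructor
  · rintro ⟨x, hxK, hxn⟩
    refine ⟨List.ofFn fun i : Fin (n + 1) => x i,
      mem_treeOf.2 ⟨by simp, x, hxK, mem_cyl_ofFn x _⟩, ?_⟩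
    rw [List.getElem?_ofFn, dif_pos n.lt_succ_self, hxn]
  · rintro ⟨σ, hσ, hσn⟩
    obtain ⟨-, x, hxK, hxσ⟩ := mem_treeOf.1 hσ
    obtain ⟨hn, hσn⟩ := List.getElem?_eq_some_iff.1 hσn
    exact ⟨x, hxK, (mem_cyl.1 hxσ n hn).trans hσn⟩

theorem cap_eq_one_sub_missMass (hμ : IsSymBranching (fun _ => b) μ) (n : ℕ) :
    cap μ {x : Cantor | x n = false} = 1 - missMass b n := by
  have := hμ.1
  have hmiss : {K : CC | (K.1 ∩ {x : Cantor | x n = false}).Nonempty}ᶜ =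
      {K | treeOf (n + 1) K ∈ (Trees (n + 1)).filter fun A => ¬HasZeroAt n A} := by
    ext K
    simp [inter_nonempty_iff_hasZeroAt, treeOf_mem_Trees]
  have hopen : IsOpen {x : Cantor | x n = false} :=
    (isOpen_discrete {false}).preimage (continuous_apply n : Continuous fun x : Cantor => x n)
  have hcompl := probReal_compl_eq_one_sub (μ := μ) (measurableSet_hit hopen)
  rw [hmiss, measureReal_treeOf_mem hμ (Finset.filter_subset _ _), Finset.sum_filter] at hcompl
  rw [cap, ← measureReal_def, missMass]
  simp only [missWeight, ite_not] at hcompl ⊢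
  linarith

end Measure

/-- for the symmetric branching measure with constant parameter `0 < b < 1/2`
and `X_n = {x : x(n) = 0}`, one has `T(X₀) = 1 − b`, the recursion
`T(X_{n+1}) = (2 − 2b)T(X_n) − (1 − 2b)T(X_n)²`, and `T(X_n) → 1`. -/
theorem stmt_15 (b : ℝ) (hb0 : 0 < b) (hb : b < 1 / 2)
    (μ : Measure CC) (hμ : IsSymBranching (fun _ => b) μ) :
    cap μ {x : Cantor | x 0 = false} = 1 - b ∧
    (∀ n : ℕ, cap μ {x : Cantor | x (n + 1) = false} =
      (2 - 2 * b) * cap μ {x : Cantor | x n = false} -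
        (1 - 2 * b) * (cap μ {x : Cantor | x n = false}) ^ 2) ∧
    Tendsto (fun n : ℕ => cap μ {x : Cantor | x n = false}) atTop (𝓝 1) := by
  have hcap := cap_eq_one_sub_missMass hμ
  refine ⟨by rw [hcap, missMass_zero], fun n => by rw [hcap, hcap, missMass_succ]; ring, ?_⟩
  have hmiss := tendsto_zero_of_succ_eq_quadratic hb0.le hb
    (by rw [missMass_zero]; exact hb0.le) (by rw [missMass_zero]; linarith) (missMass_succ b)
  simpa [hcap] using hmiss.const_sub 1
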